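/- arXiv:1902.10651 — 7 statements merged into one kernel-verified Lean document; each statement's English description precedes it below -/
import Mathlib

section
/- The function λ : ℝ × (−π, π) → ℝ defined by λ(x,θ) = sin(xθ)/sin(θ) for θ ≠ 0 and λ(x,0) = x is infinitely differentiable (C^∞) on ℝ × (−π, π). -/
open Real Set

/-- Real sine is analytic everywhere. -/
lemma analyticAt_real_sin (x : ℝ) : AnalyticAt ℝ Real.sin x := by
  have hc : AnalyticAt ℂ Complex.sin (x : ℂ) := by
    unfold Complex.sin
    apply AnalyticAt.div
    · exact ((analyticAt_cexp.comp ((analyticAt_id.neg).mul analyticAt_const)).sub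
        (analyticAt_cexp.comp (analyticAt_id.mul analyticAt_const))).mul analyticAt_const
    · exact analyticAt_const
    · norm_num
  have hcr : AnalyticAt ℝ Complex.sin (x : ℂ) := hc.restrictScalars
  have h1 : AnalyticAt ℝ (fun t : ℝ => (t : ℂ)) x := Complex.ofRealCLM.analyticAt x
  have h2 : AnalyticAt ℝ (fun t : ℝ => Complex.sin t) x := hcr.comp h1
  have h3 : AnalyticAt ℝ (fun t : ℝ => (Complex.sin t).re) x :=
    (Complex.reCLM.analyticAt _).comp h2
  exact h3.congr (by filter_upwards with t using (Complex.sin_ofReal_re t))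

/-- The sinc function as `dslope` of sine at `0`. -/
noncomputable def msinc : ℝ → ℝ := dslope Real.sin 0

lemma msinc_zero : msinc 0 = 1 := by
  simp [msinc, dslope_same, Real.deriv_sin]

lemma msinc_of_ne {t : ℝ} (ht : t ≠ 0) : msinc t = Real.sin t / t := by
  rw [msinc, dslope_of_ne _ ht, slope_def_field]
  simp

lemma analyticAt_msinc (t : ℝ) : AnalyticAt ℝ msinc t := by
  rcases eq_or_ne t 0 with rfl | ht
  · obtain ⟨p, hp⟩ := analyticAt_real_sin 0
    exact (hp.has_fpower_series_dslope_fslope).analyticAt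
  · have h : AnalyticAt ℝ (fun s => Real.sin s / s) t :=
      (analyticAt_real_sin t).div analyticAt_id ht
    refine h.congr ?_
    filter_upwards [isOpen_ne.mem_nhds ht] with s hs
    exact (msinc_of_ne hs).symm

lemma msinc_ne_zero {t : ℝ} (ht : t ∈ Ioo (-π) π) : msinc t ≠ 0 := by
  rcases eq_or_ne t 0 with rfl | h0
  · simp [msinc_zero]
  · rw [msinc_of_ne h0]
    have hs : Real.sin t ≠ 0 := by
      rcases lt_or_gt_of_ne h0 with hlt | hgt
      · exact ne_of_lt (Real.sin_neg_of_neg_of_neg_pi_lt hlt ht.1)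
      · exact ne_of_gt (Real.sin_pos_of_pos_of_lt_pi hgt ht.2)
    exact div_ne_zero hs h0

/-- The function `λ(x,θ)`: `sin(xθ)/sin(θ)` for `θ ≠ 0`, and `x` for `θ = 0`. -/
noncomputable def lam (x θ : ℝ) : ℝ := if θ = 0 then x else Real.sin (x * θ) / Real.sin θ

lemma lam_eq {x θ : ℝ} (hθ : θ ∈ Ioo (-π) π) :
    lam x θ = x * msinc (x * θ) / msinc θ := by
  rcases eq_or_ne θ 0 with rfl | h0
  · simp [lam, msinc_zero]
  · rw [lam, if_neg h0, msinc_of_ne h0]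
    rcases eq_or_ne x 0 with rfl | hx
    · simp
    · rw [msinc_of_ne (mul_ne_zero hx h0)]
      have hsθ : Real.sin θ ≠ 0 := by
        have := msinc_ne_zero hθ
        rw [msinc_of_ne h0] at this
        exact fun h => this (by simp [h])
      field_simp

/-- The function `λ : ℝ × (−π, π) → ℝ` is `C^∞` on `ℝ × (−π, π)`. -/
theorem lam_contDiffOn :
    ContDiffOn ℝ (⊤ : ℕ∞) (fun p : ℝ × ℝ => lam p.1 p.2)
      (Set.univ ×ˢ Set.Ioo (-Real.pi) Real.pi) := by
  have hmain : ContDiffOn ℝ (⊤ : ℕ∞) (fun p : ℝ × ℝ => p.1 * msinc (p.1 * p.2) / msinc p.2)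
      (Set.univ ×ˢ Set.Ioo (-Real.pi) Real.pi) := by
    intro p hp
    apply ContDiffAt.contDiffWithinAt
    have h1 : ContDiffAt ℝ (⊤ : ℕ∞) (fun p : ℝ × ℝ => msinc (p.1 * p.2)) p :=
      ((analyticAt_msinc _).contDiffAt).comp p (contDiffAt_fst.mul contDiffAt_snd)
    have h2 : ContDiffAt ℝ (⊤ : ℕ∞) (fun p : ℝ × ℝ => msinc p.2) p :=
      ((analyticAt_msinc _).contDiffAt).comp p contDiffAt_snd
    exact (contDiffAt_fst.mul h1).div h2 (msinc_ne_zero hp.2)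
  refine hmain.congr fun p hp => ?_
  exact lam_eq hp.2
end

section
/- The curve γ(t) = λ(t,θ) z₁ + λ(1−t,θ) z₀ satisfies the geodesic equation γ''(t) = −θ² · γ(t) for all t ∈ ℝ; in particular its acceleration is at every point a scalar multiple of γ(t), which is the Lorentzian normal vector to Λ^{n+1} at γ(t), so γ is a Lorentzian geodesic of Λ^{n+1} joining z₀ to z₁. -/
/-!
`λ(·,θ)` solves `y'' = -θ² y` (it is a multiple of `sin (θx)`, or `x` itself when `θ = 0`), and
this equation is invariant under the reflection `x ↦ 1 - x`; hence both coefficients of `γ`, and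
so `γ` itself, satisfy it. The endpoint values come from `λ(0,θ) = 0` and `λ(1,θ) = 1`, the
latter because `sin θ ≠ 0` for `θ ∈ (-π, π) \ {0}`.
-/

open RealInnerProductSpace

/-- The point `(u, cε) = (u₁, …, u_n, c, c) ∈ ℝ^{n+2}`. -/
noncomputable def emb {n : ℕ} (u : EuclideanSpace ℝ (Fin n)) (c : ℝ) : Fin (n + 2) → ℝ :=
  fun i => if h : (i : ℕ) < n then u ⟨i, h⟩ else c

theorem lam_zero_left (θ : ℝ) : lam 0 θ = 0 := by
  simp [lam]

theorem lam_one_left {θ : ℝ} (h₁ : -Real.pi < θ) (h₂ : θ < Real.pi) : lam 1 θ = 1 := by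
  by_cases hθ : θ = 0
  · simp [lam, hθ]
  · have hs : Real.sin θ ≠ 0 := mt (Real.sin_eq_zero_iff_of_lt_of_lt h₁ h₂).mp hθ
    simp [lam, hθ, hs]

noncomputable def lamDeriv (x θ : ℝ) : ℝ :=
  if θ = 0 then 1 else θ * Real.cos (x * θ) / Real.sin θ

theorem hasDerivAt_lam (x θ : ℝ) : HasDerivAt (fun x => lam x θ) (lamDeriv x θ) x := by
  by_cases hθ : θ = 0
  · simpa [lam, lamDeriv, hθ] using hasDerivAt_id' x
  · simp only [lam, lamDeriv, if_neg hθ]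
    exact (((hasDerivAt_id' x).mul_const θ).sin.div_const (Real.sin θ)).congr_deriv (by ring)

theorem hasDerivAt_lamDeriv (x θ : ℝ) :
    HasDerivAt (fun x => lamDeriv x θ) (-θ ^ 2 * lam x θ) x := by
  by_cases hθ : θ = 0
  · simpa [lam, lamDeriv, hθ] using hasDerivAt_const x (1 : ℝ)
  · simp only [lam, lamDeriv, if_neg hθ]
    exact ((((hasDerivAt_id' x).mul_const θ).cos.const_mul θ).div_const
      (Real.sin θ)).congr_deriv (by ring)

theorem deriv_deriv_smul_add_smul_comp_one_sub {E : Type*} [NormedAddCommGroup E]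
    [NormedSpace ℝ E] {f f' : ℝ → ℝ} {k : ℝ} (hf : ∀ t, HasDerivAt f (f' t) t)
    (hf' : ∀ t, HasDerivAt f' (k * f t) t) (a b : E) (t : ℝ) :
    deriv (deriv fun s => f s • a + f (1 - s) • b) t = k • (f t • a + f (1 - t) • b) := by
  have hd : deriv (fun s => f s • a + f (1 - s) • b) = fun s => f' s • a - f' (1 - s) • b := by
    funext s
    have h : HasDerivAt (fun s => f s • a + f (1 - s) • b) (f' s • a + (-f' (1 - s)) • b) s :=
      ((hf s).smul_const a).add ((HasDerivAt.comp_const_sub 1 s (hf (1 - s))).smul_const b)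
    rw [h.deriv, neg_smul, ← sub_eq_add_neg]
  have hd' : HasDerivAt (fun s => f' s • a - f' (1 - s) • b)
      ((k * f t) • a - (-(k * f (1 - t))) • b) t :=
    ((hf' t).smul_const a).sub ((HasDerivAt.comp_const_sub 1 t (hf' (1 - t))).smul_const b)
  rw [hd, hd'.deriv]
  simp only [neg_smul, sub_neg_eq_add, smul_add, smul_smul]

theorem geodesic_equation_general {n : ℕ}
    (n₀ n₁ : EuclideanSpace ℝ (Fin n)) (c₀ c₁ : ℝ)
    (θ : ℝ) (hθ : θ ∈ Set.Ico 0 Real.pi)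
    (γ : ℝ → Fin (n + 2) → ℝ)
    (hγ : ∀ t, γ t = lam t θ • emb n₁ c₁ + lam (1 - t) θ • emb n₀ c₀) :
    γ 0 = emb n₀ c₀ ∧ γ 1 = emb n₁ c₁ ∧
    ∀ t : ℝ, deriv (deriv γ) t = (-θ ^ 2) • γ t := by
  have hlam₁ : lam 1 θ = 1 := lam_one_left (by linarith [hθ.1, Real.pi_pos]) hθ.2
  rw [funext hγ]
  refine ⟨by simp [lam_zero_left, hlam₁], by simp [lam_zero_left, hlam₁], ?_⟩
  exact deriv_deriv_smul_add_smul_comp_one_sub (hasDerivAt_lam · θ) (hasDerivAt_lamDeriv · θ) _ _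

/-- The curve `γ(t) = λ(t,θ) z₁ + λ(1−t,θ) z₀` satisfies the geodesic equation
`γ''(t) = −θ² γ(t)` for all `t`, its acceleration being at each point a scalar multiple of
`γ(t)`, the Lorentzian normal to `Λ^{n+1}` at `γ(t)`; so `γ` is a Lorentzian geodesic of
`Λ^{n+1}` joining `z₀` to `z₁`. -/
theorem geodesic_equation {n : ℕ} (hn : 1 ≤ n)
    (n₀ n₁ : EuclideanSpace ℝ (Fin n)) (c₀ c₁ : ℝ)
    (hn₀ : ‖n₀‖ = 1) (hn₁ : ‖n₁‖ = 1) (hne : n₁ ≠ -n₀)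
    (θ : ℝ) (hθ : θ ∈ Set.Ico 0 Real.pi) (hcos : Real.cos θ = ⟪n₀, n₁⟫)
    (γ : ℝ → Fin (n + 2) → ℝ)
    (hγ : ∀ t, γ t = lam t θ • emb n₁ c₁ + lam (1 - t) θ • emb n₀ c₀) :
    γ 0 = emb n₀ c₀ ∧ γ 1 = emb n₁ c₁ ∧
    ∀ t : ℝ, deriv (deriv γ) t = (-θ ^ 2) • γ t :=
  geodesic_equation_general n₀ n₁ c₀ c₁ θ hθ γ hγ
end

section
/- If θ ∈ (0, π), the initial velocity of the geodesic γ(t) = λ(t,θ) z₁ + λ(1−t,θ) z₀ is γ'(0) = (θ/sin θ) · ( n₁ − (cos θ) n₀ , (c₁ − (cos θ) c₀) ε ), where n₁ − (cos θ) n₀ is the projection of n₁ along n₀ onto the orthogonal complement of n₀. If θ = 0 (so n₀ = n₁), then γ'(0) = (0, (c₁ − c₀) ε). -/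
open RealInnerProductSpace

lemma emb_sub_smul {n : ℕ} (u v : EuclideanSpace ℝ (Fin n)) (c d r : ℝ) :
    emb (u - r • v) (c - r * d) = emb u c - r • emb v d := by
  funext i
  simp only [emb, Pi.sub_apply, Pi.smul_apply, smul_eq_mul]
  split
  · simp [PiLp.sub_apply, PiLp.smul_apply, smul_eq_mul]
  · rfl


/-- Initial velocity of the geodesic `γ(t) = λ(t,θ) z₁ + λ(1−t,θ) z₀`: if `θ ∈ (0,π)` then
`γ'(0) = (θ/sin θ) • (n₁ − (cos θ) n₀, (c₁ − (cos θ) c₀) ε)`, where `n₁ − (cos θ) n₀` is the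
projection of `n₁` along `n₀`; if `θ = 0` (so `n₀ = n₁`) then `γ'(0) = (0, (c₁ − c₀) ε)`. -/
theorem geodesic_initial_velocity {n : ℕ} (hn : 1 ≤ n)
    (n₀ n₁ : EuclideanSpace ℝ (Fin n)) (c₀ c₁ : ℝ)
    (hn₀ : ‖n₀‖ = 1) (hn₁ : ‖n₁‖ = 1) (hne : n₁ ≠ -n₀)
    (θ : ℝ) (hθ : θ ∈ Set.Ico 0 Real.pi) (hcos : Real.cos θ = ⟪n₀, n₁⟫)
    (γ : ℝ → Fin (n + 2) → ℝ)
    (hγ : ∀ t, γ t = lam t θ • emb n₁ c₁ + lam (1 - t) θ • emb n₀ c₀) :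
    (0 < θ →
      deriv γ 0 = (θ / Real.sin θ) • emb (n₁ - Real.cos θ • n₀) (c₁ - Real.cos θ * c₀)) ∧
    (θ = 0 → n₀ = n₁ ∧ deriv γ 0 = emb (0 : EuclideanSpace ℝ (Fin n)) (c₁ - c₀)) := by
  have hγ' : γ = fun t => lam t θ • emb n₁ c₁ + lam (1 - t) θ • emb n₀ c₀ := funext hγ
  constructor
  · intro hθ0
    have hθne : θ ≠ 0 := ne_of_gt hθ0
    have hlam : ∀ x, lam x θ = Real.sin (x * θ) / Real.sin θ := fun x => if_neg hθne
    have h1 : HasDerivAt (fun t : ℝ => lam t θ) (θ / Real.sin θ) 0 := by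
      have : HasDerivAt (fun t : ℝ => Real.sin (t * θ) / Real.sin θ)
          (Real.cos (0 * θ) * θ / Real.sin θ) 0 :=
        ((Real.hasDerivAt_sin ((0:ℝ) * θ)).comp 0 (hasDerivAt_mul_const θ)).div_const _
      simpa [hlam] using this.congr_deriv (by simp)
    have h2 : HasDerivAt (fun t : ℝ => lam (1 - t) θ) (-(θ * Real.cos θ) / Real.sin θ) 0 := by
      have hin : HasDerivAt (fun t : ℝ => (1 - t) * θ) (-θ) 0 := by
        simpa using ((hasDerivAt_const (0:ℝ) (1:ℝ)).sub (hasDerivAt_id 0)).mul_const θ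
      have : HasDerivAt (fun t : ℝ => Real.sin ((1 - t) * θ) / Real.sin θ)
          (Real.cos ((1 - 0) * θ) * (-θ) / Real.sin θ) 0 :=
        ((Real.hasDerivAt_sin (((1:ℝ) - 0) * θ)).comp 0 hin).div_const _
      simp only [hlam]
      convert this using 1
      simp; ring
    have hd : HasDerivAt γ ((θ / Real.sin θ) • emb n₁ c₁
        + (-(θ * Real.cos θ) / Real.sin θ) • emb n₀ c₀) 0 := by
      rw [hγ']
      exact (h1.smul_const _).add (h2.smul_const _)
    rw [hd.deriv, emb_sub_smul, smul_sub, smul_smul]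
    have : -(θ * Real.cos θ) / Real.sin θ = -(θ / Real.sin θ * Real.cos θ) := by ring
    rw [this, neg_smul, ← sub_eq_add_neg]
  · intro h0
    subst h0
    have hinner : ⟪n₀, n₁⟫ = 1 := by rw [← hcos, Real.cos_zero]
    have heq : n₀ = n₁ := (inner_eq_one_iff_of_norm_eq_one hn₀ hn₁).mp hinner
    refine ⟨heq, ?_⟩
    have hlam : ∀ x : ℝ, lam x 0 = x := fun x => if_pos rfl
    have hd : HasDerivAt γ ((1:ℝ) • emb n₁ c₁ + (-1:ℝ) • emb n₀ c₀) 0 := by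
      rw [hγ']
      simp only [hlam]
      refine ((hasDerivAt_id 0).smul_const _).add ?_
      simpa using (((hasDerivAt_const (0:ℝ) (1:ℝ)).sub (hasDerivAt_id 0))).smul_const (emb n₀ c₀)
    rw [hd.deriv]
    have := emb_sub_smul n₁ n₀ c₁ c₀ 1
    simp only [one_smul, one_mul] at this ⊢
    rw [neg_one_smul, ← sub_eq_add_neg, ← this, heq, sub_self]
end

section
/- The Lorentzian geodesic flow is invariant under the extended Poincaré group: let A : ℝⁿ → ℝⁿ be a linear isometry (orthogonal transformation), b ∈ ℝ, p ∈ ℝⁿ, and define ψ̃(u, cε) = (A u, (b c + (A u)·p) ε). Then (A n₀)·(A n₁) = cos θ, and for every t ∈ ℝ, ψ̃(γ(t)) = λ(t,θ) ψ̃(z₁) + λ(1−t,θ) ψ̃(z₀); i.e. ψ̃ carries the Lorentzian geodesic from z₀ to z₁ to the Lorentzian geodesic from ψ̃(z₀) to ψ̃(z₁). -/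
open RealInnerProductSpace

/-- Invariance of the Lorentzian geodesic flow under the extended Poincaré group: for an
orthogonal transformation `A`, `b ∈ ℝ`, `p ∈ ℝⁿ`, the map `ψ̃(u, cε) = (A u, (b c + (A u)·p) ε)`
satisfies `(A n₀)·(A n₁) = cos θ` and carries the Lorentzian geodesic from `z₀` to `z₁` to the
Lorentzian geodesic from `ψ̃(z₀)` to `ψ̃(z₁)`: `ψ̃(γ(t)) = λ(t,θ) ψ̃(z₁) + λ(1−t,θ) ψ̃(z₀)`. -/
theorem geodesic_flow_poincare_invariant {n : ℕ} (hn : 1 ≤ n)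
    (n₀ n₁ : EuclideanSpace ℝ (Fin n)) (c₀ c₁ : ℝ)
    (hn₀ : ‖n₀‖ = 1) (hn₁ : ‖n₁‖ = 1) (hne : n₁ ≠ -n₀)
    (θ : ℝ) (hθ : θ ∈ Set.Ico 0 Real.pi) (hcos : Real.cos θ = ⟪n₀, n₁⟫)
    (A : EuclideanSpace ℝ (Fin n) ≃ₗᵢ[ℝ] EuclideanSpace ℝ (Fin n))
    (b : ℝ) (p : EuclideanSpace ℝ (Fin n))
    (ψ : EuclideanSpace ℝ (Fin n) → ℝ → Fin (n + 2) → ℝ)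
    (hψ : ∀ u c, ψ u c = emb (A u) (b * c + ⟪A u, p⟫))
    (nt : ℝ → EuclideanSpace ℝ (Fin n)) (ct : ℝ → ℝ)
    (hnt : ∀ t, nt t = lam t θ • n₁ + lam (1 - t) θ • n₀)
    (hct : ∀ t, ct t = lam t θ * c₁ + lam (1 - t) θ * c₀) :
    ⟪A n₀, A n₁⟫ = Real.cos θ ∧
    ∀ t : ℝ, ψ (nt t) (ct t) = lam t θ • ψ n₁ c₁ + lam (1 - t) θ • ψ n₀ c₀ := by
  constructor
  · rw [A.inner_map_map]; exact hcos.symm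
  · intro t
    funext i
    have hA : A (nt t) = lam t θ • A n₁ + lam (1 - t) θ • A n₀ := by
      rw [hnt t, map_add, map_smul, map_smul]
    simp only [hψ, emb, hA, hct t, Pi.add_apply, Pi.smul_apply, smul_eq_mul]
    by_cases h : (i : ℕ) < n
    · simp [h, PiLp.add_apply, PiLp.smul_apply, smul_eq_mul]
    · simp only [h, dif_neg, not_false_iff]
      rw [inner_add_left, real_inner_smul_left, real_inner_smul_left]
      ring
end

section
/- Let A : ℝⁿ → ℝⁿ be a linear isometry that fixes P^⊥ pointwise and preserves the 2-plane P, let n₀ be a unit vector with n₀ = v + p (v ∈ P, p ∈ P^⊥), set n₁ = A(n₀), and let θ ∈ [0,π) satisfy cos θ = n₀·n₁ with n₁ ≠ −n₀. Then for all t ∈ ℝ the Lorentzian geodesic between z₀ = (n₀, c₀ε) and z₁ = (A(n₀), c₀ε) is given by the pseudo-rotation formula γ(t) = ( λ(t,θ) A(v) + λ(1−t,θ) v + μ(1−2t, θ/2) p , μ(1−2t, θ/2) c₀ ε ). -/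
open RealInnerProductSpace

/-- The function `μ(x,θ) = cos(xθ)/cos(θ)`. -/
noncomputable def mu (x θ : ℝ) : ℝ := Real.cos (x * θ) / Real.cos θ

/-!
Both endpoints share the component `p` (fixed by `A`) and the light-like part `c₀ ε`, so the
geodesic multiplies them by `λ(t,θ) + λ(1−t,θ)`. Sum-to-product turns this sum into
`μ(1−2t, θ/2)`; the `P`-components `A v` and `v` keep their separate coefficients.
-/

theorem lam_add_lam_one_sub {θ : ℝ} (hθ : θ = 0 ∨ Real.sin θ ≠ 0) (t : ℝ) :
    lam t θ + lam (1 - t) θ = mu (1 - 2 * t) (θ / 2) := by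
  rcases hθ with rfl | hsin
  · simp [lam, mu]
  have hθ0 : θ ≠ 0 := by rintro rfl; simp at hsin
  have hsin_half : Real.sin θ = 2 * Real.sin (θ / 2) * Real.cos (θ / 2) := by
    rw [← Real.sin_two_mul]; ring_nf
  have h2sin_half : 2 * Real.sin (θ / 2) ≠ 0 := left_ne_zero_of_mul (hsin_half ▸ hsin)
  have hsin_sum : Real.sin (t * θ) + Real.sin ((1 - t) * θ) =
      2 * Real.sin (θ / 2) * Real.cos ((1 - 2 * t) * (θ / 2)) := by
    rw [Real.sin_add_sin, ← Real.cos_neg]; ring_nf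
  rw [lam, lam, mu, if_neg hθ0, if_neg hθ0, ← add_div, hsin_sum, hsin_half,
    mul_div_mul_left _ _ h2sin_half]

theorem smul_emb {n : ℕ} (a : ℝ) (u : EuclideanSpace ℝ (Fin n)) (c : ℝ) :
    a • emb u c = emb (a • u) (a * c) := by
  ext i
  by_cases h : (i : ℕ) < n <;> simp [emb, h]

theorem emb_add_emb {n : ℕ} (u w : EuclideanSpace ℝ (Fin n)) (c d : ℝ) :
    emb u c + emb w d = emb (u + w) (c + d) := by
  ext i
  by_cases h : (i : ℕ) < n <;> simp [emb, h]

theorem pseudo_rotation_formula_general {n : ℕ}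
    (P : Submodule ℝ (EuclideanSpace ℝ (Fin n)))
    (A : EuclideanSpace ℝ (Fin n) ≃ₗᵢ[ℝ] EuclideanSpace ℝ (Fin n))
    (hfix : ∀ q ∈ Pᗮ, A q = q)
    (n₀ n₁ v p : EuclideanSpace ℝ (Fin n)) (c₀ : ℝ)
    (hp : p ∈ Pᗮ) (hsum : n₀ = v + p)
    (hn₁ : n₁ = A n₀)
    (θ : ℝ) (hθ : θ ∈ Set.Ico 0 Real.pi) :
    ∀ t : ℝ,
      lam t θ • emb n₁ c₀ + lam (1 - t) θ • emb n₀ c₀ =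
        emb (lam t θ • A v + lam (1 - t) θ • v + mu (1 - 2 * t) (θ / 2) • p)
          (mu (1 - 2 * t) (θ / 2) * c₀) := by
  intro t
  have hθ' : θ = 0 ∨ Real.sin θ ≠ 0 := by
    rcases hθ.1.eq_or_lt with h | h
    · exact .inl h.symm
    · exact .inr (Real.sin_pos_of_pos_of_lt_pi h hθ.2).ne'
  have hn₁' : n₁ = A v + p := by rw [hn₁, hsum, map_add, hfix p hp]
  rw [smul_emb, smul_emb, emb_add_emb, hn₁', hsum, ← lam_add_lam_one_sub hθ' t]
  congr 1
  · module
  · ring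

/-- Pseudo-rotation formula: for a linear isometry `A` fixing `P^⊥` pointwise and preserving the
2-plane `P`, a unit vector `n₀ = v + p` (`v ∈ P`, `p ∈ P^⊥`), `n₁ = A n₀`, and `θ ∈ [0,π)` with
`cos θ = n₀·n₁`, `n₁ ≠ −n₀`, the Lorentzian geodesic between `z₀ = (n₀, c₀ε)` and
`z₁ = (A n₀, c₀ε)` is
`γ(t) = (λ(t,θ) A(v) + λ(1−t,θ) v + μ(1−2t, θ/2) p, μ(1−2t, θ/2) c₀ ε)`. -/
theorem pseudo_rotation_formula {n : ℕ}
    (P : Submodule ℝ (EuclideanSpace ℝ (Fin n))) (hP : Module.finrank ℝ P = 2)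
    (A : EuclideanSpace ℝ (Fin n) ≃ₗᵢ[ℝ] EuclideanSpace ℝ (Fin n))
    (hfix : ∀ q ∈ Pᗮ, A q = q)
    (hpres : ∀ w ∈ P, A w ∈ P)
    (n₀ n₁ v p : EuclideanSpace ℝ (Fin n)) (c₀ : ℝ)
    (hn₀ : ‖n₀‖ = 1) (hv : v ∈ P) (hp : p ∈ Pᗮ) (hsum : n₀ = v + p)
    (hn₁ : n₁ = A n₀) (hne : n₁ ≠ -n₀)
    (θ : ℝ) (hθ : θ ∈ Set.Ico 0 Real.pi) (hcos : Real.cos θ = ⟪n₀, n₁⟫) :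
    ∀ t : ℝ,
      lam t θ • emb n₁ c₀ + lam (1 - t) θ • emb n₀ c₀ =
        emb (lam t θ • A v + lam (1 - t) θ • v + mu (1 - 2 * t) (θ / 2) • p)
          (mu (1 - 2 * t) (θ / 2) * c₀) :=
  pseudo_rotation_formula_general P A hfix n₀ n₁ v p c₀ hp hsum hn₁ θ hθ
end

section
/- Let n₀, e₀ ∈ ℝⁿ be orthonormal, let θ ∈ (0, π), and set n₁ = (cos θ) n₀ + (sin θ) e₀ and e₁ = −(sin θ) n₀ + (cos θ) e₀. Define n_t = λ(t,θ) n₁ + λ(1−t,θ) n₀ and e_t = λ(t,θ) e₁ + λ(1−t,θ) e₀. Then for all t ∈ ℝ, e_t = (1/θ) · (d n_t / dt); consequently, for any c₀, c₁ ∈ ℝ and c_t = λ(t,θ) c₁ + λ(1−t,θ) c₀, the vector field (e_t, (1/θ) c_t' ε) along the Lorentzian geodesic γ(t) = (n_t, c_t ε) equals (1/θ) γ'(t), and hence is Lorentzian parallel along γ. -/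
open RealInnerProductSpace

/-! `λ(·,θ)` and `cos(·θ)/sin θ` are, up to the factors `θ` and `-θ`, each other's derivatives,
so the curve `σ(t) = λ(t,θ) a + λ(1-t,θ) b` has velocity `θ v` and `v' = -θ σ`. For `a = n₁`,
`b = n₀` the addition formulas for sine and cosine identify `v` with `e_t`. Since `emb` is linear,
`γ = emb n_t c_t` is such a curve as well, so the frame field `γ'/θ` has derivative `-θ γ`. -/

open Real

lemma lam_of_ne_zero {θ : ℝ} (hθ : θ ≠ 0) (x : ℝ) : lam x θ = sin (x * θ) / sin θ := by
  simp [lam, hθ]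

lemma hasDerivAt_lam_s12 {θ : ℝ} (hθ : θ ≠ 0) (t : ℝ) :
    HasDerivAt (lam · θ) (θ * (cos (t * θ) / sin θ)) t := by
  simp only [lam_of_ne_zero hθ]
  exact (((hasDerivAt_mul_const (x := t) θ).sin).div_const (sin θ)).congr_deriv (by ring)

lemma hasDerivAt_cos_mul_div_sin {θ : ℝ} (hθ : θ ≠ 0) (t : ℝ) :
    HasDerivAt (fun x => cos (x * θ) / sin θ) (-θ * lam t θ) t := by
  rw [lam_of_ne_zero hθ]
  exact (((hasDerivAt_mul_const (x := t) θ).cos).div_const (sin θ)).congr_deriv (by ring)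

section Slerp

variable {E : Type*} [NormedAddCommGroup E] [NormedSpace ℝ E]

noncomputable def slerp (θ : ℝ) (a b : E) (t : ℝ) : E := lam t θ • a + lam (1 - t) θ • b

noncomputable def slerpVel (θ : ℝ) (a b : E) (t : ℝ) : E :=
  (cos (t * θ) / sin θ) • a - (cos ((1 - t) * θ) / sin θ) • b

lemma hasDerivAt_slerp {θ : ℝ} (hθ : θ ≠ 0) (a b : E) (t : ℝ) :
    HasDerivAt (slerp θ a b) (θ • slerpVel θ a b t) t := by
  have hb := (hasDerivAt_lam_s12 hθ (1 - t)).comp_const_sub 1 t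
  exact (((hasDerivAt_lam_s12 hθ t).smul_const a).add (hb.smul_const b)).congr_deriv
    (by simp only [slerpVel]; module)

lemma hasDerivAt_slerpVel {θ : ℝ} (hθ : θ ≠ 0) (a b : E) (t : ℝ) :
    HasDerivAt (slerpVel θ a b) (-θ • slerp θ a b t) t := by
  have hb := (hasDerivAt_cos_mul_div_sin hθ (1 - t)).comp_const_sub 1 t
  exact (((hasDerivAt_cos_mul_div_sin hθ t).smul_const a).sub (hb.smul_const b)).congr_deriv
    (by simp only [slerp]; module)

lemma slerp_rotated_eq_slerpVel {θ : ℝ} (hθ : θ ≠ 0) (hsin : sin θ ≠ 0) (n₀ e₀ : E) (t : ℝ) :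
    slerp θ (-sin θ • n₀ + cos θ • e₀) e₀ t = slerpVel θ (cos θ • n₀ + sin θ • e₀) n₀ t := by
  have hsub : (1 - t) * θ = θ - t * θ := by ring
  simp only [slerp, slerpVel, lam_of_ne_zero hθ, hsub, sin_sub, cos_sub]
  match_scalars <;> field_simp <;> ring

end Slerp

lemma emb_smul {n : ℕ} (r : ℝ) (u : EuclideanSpace ℝ (Fin n)) (c : ℝ) :
    emb (r • u) (r • c) = r • emb u c := by
  funext i
  by_cases h : (i : ℕ) < n <;> simp [emb, h]

lemma HasDerivAt.emb {n : ℕ} {u : ℝ → EuclideanSpace ℝ (Fin n)} {c : ℝ → ℝ}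
    {u' : EuclideanSpace ℝ (Fin n)} {c' t : ℝ} (hu : HasDerivAt u u' t) (hc : HasDerivAt c c' t) :
    HasDerivAt (fun s => emb (u s) (c s)) (emb u' c') t := by
  refine hasDerivAt_pi.2 fun i => ?_
  by_cases h : (i : ℕ) < n
  · simpa [_root_.emb, h, Function.comp_def] using
      (EuclideanSpace.proj (𝕜 := ℝ) (⟨i, h⟩ : Fin n)).hasFDerivAt.comp_hasDerivAt t hu
  · simpa [_root_.emb, h] using hc

theorem parallel_frame_velocity_general {n : ℕ}
    (n₀ e₀ : EuclideanSpace ℝ (Fin n))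
    (θ : ℝ) (hθ : θ ∈ Set.Ioo 0 Real.pi)
    (n₁ e₁ : EuclideanSpace ℝ (Fin n))
    (hn₁ : n₁ = Real.cos θ • n₀ + Real.sin θ • e₀)
    (he₁ : e₁ = -Real.sin θ • n₀ + Real.cos θ • e₀)
    (nt et : ℝ → EuclideanSpace ℝ (Fin n))
    (hnt : ∀ t, nt t = lam t θ • n₁ + lam (1 - t) θ • n₀)
    (het : ∀ t, et t = lam t θ • e₁ + lam (1 - t) θ • e₀) :
    (∀ t : ℝ, et t = (1 / θ) • deriv nt t) ∧
    ∀ (c₀ c₁ : ℝ) (ct : ℝ → ℝ), (∀ t, ct t = lam t θ * c₁ + lam (1 - t) θ * c₀) →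
      ∀ γ : ℝ → Fin (n + 2) → ℝ, (∀ t, γ t = emb (nt t) (ct t)) →
        (∀ t : ℝ, emb (et t) ((1 / θ) * deriv ct t) = (1 / θ) • deriv γ t) ∧
        ∃ f : ℝ → ℝ, ∀ t : ℝ,
          deriv (fun s => emb (et s) ((1 / θ) * deriv ct s)) t = f t • γ t := by
  obtain ⟨hθ0, hθπ⟩ := hθ
  have hθ : θ ≠ 0 := hθ0.ne'
  have hsin : sin θ ≠ 0 := (sin_pos_of_pos_of_lt_pi hθ0 hθπ).ne'
  obtain rfl : nt = slerp θ n₁ n₀ := funext hnt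
  obtain rfl : et = slerp θ e₁ e₀ := funext het
  have het_vel : ∀ t, slerp θ e₁ e₀ t = slerpVel θ n₁ n₀ t := by
    intro t; rw [hn₁, he₁, slerp_rotated_eq_slerpVel hθ hsin]
  refine ⟨fun t => ?_, fun c₀ c₁ ct hct γ hγ => ?_⟩
  · rw [(hasDerivAt_slerp hθ n₁ n₀ t).deriv, smul_smul, one_div_mul_cancel hθ, one_smul, het_vel]
  obtain rfl : ct = slerp θ c₁ c₀ := funext hct
  obtain rfl : γ = fun s => emb (slerp θ n₁ n₀ s) (slerp θ c₁ c₀ s) := funext hγ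
  have hframe : ∀ t, emb (slerp θ e₁ e₀ t) ((1 / θ) * deriv (slerp θ c₁ c₀) t) =
      emb (slerpVel θ n₁ n₀ t) (slerpVel θ c₁ c₀ t) := by
    intro t
    rw [het_vel, (hasDerivAt_slerp hθ c₁ c₀ t).deriv, smul_eq_mul, ← mul_assoc, one_div_mul_cancel hθ, one_mul]
  refine ⟨fun t => ?_, fun _ => -θ, fun t => ?_⟩
  · rw [hframe, ((hasDerivAt_slerp hθ n₁ n₀ t).emb (hasDerivAt_slerp hθ c₁ c₀ t)).deriv,
      emb_smul, smul_smul, one_div_mul_cancel hθ, one_smul]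
  · rw [funext hframe,
      ((hasDerivAt_slerpVel hθ n₁ n₀ t).emb (hasDerivAt_slerpVel hθ c₁ c₀ t)).deriv, emb_smul]

/-- With `n₁ = (cos θ) n₀ + (sin θ) e₀`, `e₁ = −(sin θ) n₀ + (cos θ) e₀`,
`n_t = λ(t,θ) n₁ + λ(1−t,θ) n₀` and `e_t = λ(t,θ) e₁ + λ(1−t,θ) e₀`, one has
`e_t = (1/θ)(d n_t/dt)` for all `t`; consequently for `c_t = λ(t,θ) c₁ + λ(1−t,θ) c₀` the vector
field `(e_t, (1/θ) c_t' ε)` along the Lorentzian geodesic `γ(t) = (n_t, c_t ε)` equals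
`(1/θ) γ'(t)`, hence is Lorentzian parallel along `γ` (its derivative is at each `t` a scalar
multiple of `γ(t)`). -/
theorem parallel_frame_velocity {n : ℕ} (hn : 2 ≤ n)
    (n₀ e₀ : EuclideanSpace ℝ (Fin n))
    (hn₀ : ‖n₀‖ = 1) (he₀ : ‖e₀‖ = 1) (horth : ⟪n₀, e₀⟫ = 0)
    (θ : ℝ) (hθ : θ ∈ Set.Ioo 0 Real.pi)
    (n₁ e₁ : EuclideanSpace ℝ (Fin n))
    (hn₁ : n₁ = Real.cos θ • n₀ + Real.sin θ • e₀)
    (he₁ : e₁ = -Real.sin θ • n₀ + Real.cos θ • e₀)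
    (nt et : ℝ → EuclideanSpace ℝ (Fin n))
    (hnt : ∀ t, nt t = lam t θ • n₁ + lam (1 - t) θ • n₀)
    (het : ∀ t, et t = lam t θ • e₁ + lam (1 - t) θ • e₀) :
    (∀ t : ℝ, et t = (1 / θ) • deriv nt t) ∧
    ∀ (c₀ c₁ : ℝ) (ct : ℝ → ℝ), (∀ t, ct t = lam t θ * c₁ + lam (1 - t) θ * c₀) →
      ∀ γ : ℝ → Fin (n + 2) → ℝ, (∀ t, γ t = emb (nt t) (ct t)) →
        (∀ t : ℝ, emb (et t) ((1 / θ) * deriv ct t) = (1 / θ) • deriv γ t) ∧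
        ∃ f : ℝ → ℝ, ∀ t : ℝ,
          deriv (fun s => emb (et s) ((1 / θ) * deriv ct s)) t = f t • γ t :=
  parallel_frame_velocity_general n₀ e₀ θ hθ n₁ e₁ hn₁ he₁ nt et hnt het
end

section
/- Let α : ℝ → ℝ³ be a smooth unit-speed curve with Frenet apparatus T = α', N, B, constant curvature κ > 0 and torsion τ ≡ 0 (so T' = κN, N' = −κT, B' = 0), and let γ(t) = (T(t), (α(t)·α'(t)) ε) ∈ ℝ⁵. Then with β(t) = −(κ/2)‖α(t)‖², the vector field (N(t), β(t) ε) satisfies d/dt (N(t), β(t)ε) = −κ · γ(t), and the vector field (B(t), 0·ε) is constant; hence {N, B} yields a Lorentzian parallel family of orthonormal frames in the normal planes of α along the Lorentzian geodesic γ. -/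
open RealInnerProductSpace

/-- For a smooth unit-speed curve `α` in `ℝ³` with Frenet apparatus `T = α'`, `N`, `B`, constant
curvature `κ > 0` and torsion `τ ≡ 0` (`T' = κN`, `N' = −κT`, `B' = 0`), and
`γ(t) = (T(t), (α(t)·α'(t))ε) ∈ ℝ⁵`: with `β(t) = −(κ/2)‖α(t)‖²` the vector field
`(N(t), β(t)ε)` satisfies `d/dt (N(t), β(t)ε) = −κ·γ(t)`, and `(B(t), 0·ε)` is constant; so
`{N, B}` is a Lorentzian parallel family of orthonormal frames along the Lorentzian geodesic
`γ`. -/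
theorem frenet_frame_lorentzian_parallel
    (α T N B : ℝ → EuclideanSpace ℝ (Fin 3)) (κ : ℝ)
    (hα : ContDiff ℝ (⊤ : ℕ∞) α) (hN : ContDiff ℝ (⊤ : ℕ∞) N) (hB : ContDiff ℝ (⊤ : ℕ∞) B)
    (hT : ∀ t, T t = deriv α t)
    (hunit : ∀ t, ‖deriv α t‖ = 1)
    (hκpos : 0 < κ)
    (hTu : ∀ t, ‖T t‖ = 1) (hNu : ∀ t, ‖N t‖ = 1) (hBu : ∀ t, ‖B t‖ = 1)
    (hTN : ∀ t, ⟪T t, N t⟫ = 0) (hTB : ∀ t, ⟪T t, B t⟫ = 0) (hNB : ∀ t, ⟪N t, B t⟫ = 0)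
    (hT' : ∀ t, deriv T t = κ • N t)
    (hN' : ∀ t, deriv N t = -κ • T t)
    (hB' : ∀ t, deriv B t = 0)
    (γ : ℝ → Fin 5 → ℝ)
    (hγ : ∀ t, γ t = emb (T t) ⟪α t, deriv α t⟫)
    (β : ℝ → ℝ) (hβ : ∀ t, β t = -(κ / 2) * ‖α t‖ ^ 2) :
    (∀ t : ℝ, deriv (fun s => emb (N s) (β s)) t = (-κ) • γ t) ∧
    (∀ t s : ℝ, emb (B t) 0 = emb (B s) 0) := by
  constructor
  · intro t
    have hαd : HasDerivAt α (deriv α t) t := (hα.differentiable (by simp) t).hasDerivAt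
    have hNd : HasDerivAt N (deriv N t) t := (hN.differentiable (by simp) t).hasDerivAt
    have hβd : HasDerivAt β (-κ * ⟪α t, deriv α t⟫) t := by
      have h1 : HasDerivAt (fun s => ⟪α s, α s⟫)
          (⟪α t, deriv α t⟫ + ⟪deriv α t, α t⟫) t := hαd.inner ℝ hαd
      have h2 : HasDerivAt (fun s => -(κ / 2) * ⟪α s, α s⟫)
          (-(κ / 2) * (⟪α t, deriv α t⟫ + ⟪deriv α t, α t⟫)) t := h1.const_mul _
      have heq : β = fun s => -(κ / 2) * ⟪α s, α s⟫ := by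
        funext s
        rw [hβ s, real_inner_self_eq_norm_sq]
      rw [heq]
      convert h2 using 1
      rw [real_inner_comm (deriv α t) (α t)]
      ring
    have key : HasDerivAt (fun s => emb (N s) (β s)) ((-κ) • γ t) t := by
      rw [hasDerivAt_pi]
      intro i
      by_cases h : (i : ℕ) < 3
      · have : (fun s => emb (N s) (β s) i) = fun s => N s ⟨i, h⟩ := by
          funext s; simp [emb, h]
        rw [this]
        have hcomp : HasDerivAt (fun s => N s ⟨i, h⟩) (deriv N t ⟨i, h⟩) t := by
          have := (EuclideanSpace.proj (⟨i, h⟩ : Fin 3)).hasFDerivAt.comp_hasDerivAt t hNd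
          exact this
        convert hcomp using 1
        · rfl
        · rfl
        simp [hγ, emb, h, hN', Pi.smul_apply, smul_eq_mul]
      · have : (fun s => emb (N s) (β s) i) = fun s => β s := by
          funext s; simp [emb, h]
        rw [this]
        convert hβd using 1
        · rfl
        · rfl
        simp [hγ, emb, h, Pi.smul_apply, smul_eq_mul]
    exact key.deriv
  · intro t s
    have : B t = B s := is_const_of_deriv_eq_zero (hB.differentiable (by simp)) hB' t s
    simp [emb, this]
end
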